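/- Let R be an expanding edge replacement system and Gl_R its gluing automaton. If a finite word (x₀,y₀)(x₁,y₁)…(x_k,y_k) is recognized by Gl_R and the transition processing the last letter (x_k,y_k) is a Type 2 transition, then x₀…x_k and y₀…y_k are adjacent edges of the full expansion E_k, and the last state of the run, q₁(c(x_k),α;c(y_k),β), records their adjacency type in E_k in the sense of the Type 1 rule. -/

import Mathlib

/-!
Formalization of edge replacement systems, their limit-space gluing relation,
and the gluing automaton, following Belk–Forrest and the paper
"Rationality of the gluing of edge replacement systems".
-/

namespace ERSPaper

/-- The five adjacency-type symbols `in`, `out`, `lp`, `db⁺`, `db⁻`. -/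
inductive EType : Type
  | inn : EType
  | out : EType
  | lp : EType
  | dbp : EType
  | dbm : EType
  deriving DecidableEq

/-- An edge replacement system satisfying the loop-color assumption.
`V z` / `E z` are the vertices/edges of the base graph (`z = none`) or of the
replacement graph `Γ c` (`z = some c`).  For loop colors the two boundary
vertices coincide (the single boundary vertex `λ_c`); for non-loop colors they
are distinct.  The field `loop_iff` is the loop-color assumption: an edge is a
loop if and only if its color is a loop color. -/
structure ERS : Type 1 where
  Col : Type
  [colFintype : Fintype Col]
  [colDecEq : DecidableEq Col]
  V : Option Col → Type
  E : Option Col → Type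
  [vFintype : ∀ z, Fintype (V z)]
  [eFintype : ∀ z, Fintype (E z)]
  [vDecEq : ∀ z, DecidableEq (V z)]
  ini : ∀ z, E z → V z
  fin : ∀ z, E z → V z
  col : ∀ z, E z → Col
  loopCol : Col → Prop
  bIni : ∀ c : Col, V (some c)
  bFin : ∀ c : Col, V (some c)
  bd_eq_iff : ∀ c : Col, (bIni c = bFin c ↔ loopCol c)
  loop_iff : ∀ z (e : E z), (ini z e = fin z e ↔ loopCol (col z e))

attribute [instance] ERS.colFintype ERS.colDecEq ERS.vFintype ERS.eFintype ERS.vDecEq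

namespace ERS

/-- The alphabet `Σ`: the disjoint union of the edge sets of the base graph and
of all the replacement graphs. -/
def Alph (R : ERS) : Type := Σ z : Option R.Col, R.E z

/-- Membership in the symbol space `Ω_R`: infinite directed walks on the color
graph starting at `q(0)`, i.e. `x₀` is an edge of the base graph and `x_{l+1}`
is an edge of `Γ_{c(x_l)}`. -/
def IsWalk (R : ERS) (x : ℕ → R.Alph) : Prop :=
  (x 0).1 = none ∧ ∀ l : ℕ, (x (l + 1)).1 = some (R.col (x l).1 (x l).2)

/-- The finite word `x₀ … x_m` belongs to `E_R`. -/
def IsWalkUpTo (R : ERS) (x : ℕ → R.Alph) (m : ℕ) : Prop :=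
  (x 0).1 = none ∧ ∀ l : ℕ, l < m → (x (l + 1)).1 = some (R.col (x l).1 (x l).2)

theorem IsWalk.upTo {R : ERS} {x : ℕ → R.Alph} (hx : R.IsWalk x) (m : ℕ) :
    R.IsWalkUpTo x m :=
  ⟨hx.1, fun l _ => hx.2 l⟩

end ERS

/-- A finite graph whose edges are colored by the colors of `R`. -/
structure GraphData (R : ERS) : Type 1 where
  V : Type
  E : Type
  ι : E → V
  τ : E → V
  col : E → R.Col

/-- An edge is incident on a vertex. -/
def GraphData.IncidentOn {R : ERS} (G : GraphData R) (e : G.E) (v : G.V) : Prop :=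
  G.ι e = v ∨ G.τ e = v

/-- Two edges are incident on a common vertex. -/
def GraphData.Adjacent {R : ERS} (G : GraphData R) (e f : G.E) : Prop :=
  ∃ v : G.V, G.IncidentOn e v ∧ G.IncidentOn f v

namespace ERS

/-- When expanding the edge `e`, a vertex `v` of the replacement graph
`Γ_{c(e)}` is attached: boundary vertices go to the endpoints of `e`,
interior vertices give fresh vertices. -/
def attach (R : ERS) (G : GraphData R) (e : G.E) (v : R.V (some (G.col e))) :
    G.V ⊕ (Σ e : G.E,
      {v : R.V (some (G.col e)) // v ≠ R.bIni (G.col e) ∧ v ≠ R.bFin (G.col e)}) :=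
  if h1 : v = R.bIni (G.col e) then Sum.inl (G.ι e)
  else if h2 : v = R.bFin (G.col e) then Sum.inl (G.τ e)
  else Sum.inr ⟨e, v, h1, h2⟩

/-- The simultaneous expansion of every edge of `G`. -/
def expandG (R : ERS) (G : GraphData R) : GraphData R where
  V := G.V ⊕ (Σ e : G.E,
    {v : R.V (some (G.col e)) // v ≠ R.bIni (G.col e) ∧ v ≠ R.bFin (G.col e)})
  E := Σ e : G.E, R.E (some (G.col e))
  ι := fun p => R.attach G p.1 (R.ini (some (G.col p.1)) p.2)
  τ := fun p => R.attach G p.1 (R.fin (some (G.col p.1)) p.2)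
  col := fun p => R.col (some (G.col p.1)) p.2

/-- The base graph, as graph data. -/
def base (R : ERS) : GraphData R :=
  ⟨R.V none, R.E none, R.ini none, R.fin none, R.col none⟩

/-- The full expansion sequence `E_m`. -/
def fullExp (R : ERS) : ℕ → GraphData R
  | 0 => R.base
  | m + 1 => R.expandG (R.fullExp m)

theorem col_cast (R : ERS) (p : R.Alph) (z : Option R.Col) (h : p.1 = z) :
    R.col z (cast (congrArg R.E h) p.2) = R.col p.1 p.2 := by
  rcases p with ⟨w, e⟩
  cases h
  rfl

/-- The edge of the full expansion `E_m` labeled by the word `x₀ … x_m`,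
together with the fact that its color is the color of its last letter. -/
def wordEdge (R : ERS) (x : ℕ → R.Alph) :
    (m : ℕ) → R.IsWalkUpTo x m →
      {e : (R.fullExp m).E // (R.fullExp m).col e = R.col (x m).1 (x m).2}
  | 0, hx => ⟨cast (congrArg R.E hx.1) (x 0).2, R.col_cast (x 0) none hx.1⟩
  | m + 1, hx =>
    let prev := R.wordEdge x m ⟨hx.1, fun l hl => hx.2 l (Nat.lt_succ_of_lt hl)⟩
    let h : (x (m + 1)).1 = some ((R.fullExp m).col prev.1) :=
      (hx.2 m (Nat.lt_succ_self m)).trans (congrArg some prev.2.symm)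
    ⟨⟨prev.1, cast (congrArg R.E h) (x (m + 1)).2⟩, R.col_cast (x (m + 1)) _ h⟩

/-- The gluing relation: two elements of `Ω_R` are glued when, for every large
enough `n`, their length-`(n+1)` prefixes are incident on a common vertex of
the full expansion `E_n`. -/
def Glued (R : ERS) (x y : ℕ → R.Alph) (hx : R.IsWalk x) (hy : R.IsWalk y) : Prop :=
  ∃ N : ℕ, ∀ n : ℕ, N ≤ n →
    (R.fullExp n).Adjacent (R.wordEdge x n (hx.upTo n)).1 (R.wordEdge y n (hy.upTo n)).1

/-- The expanding condition on a replacement system (formulated after the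
identification of the boundary vertices for loop colors). -/
structure Expanding (R : ERS) : Prop where
  no_isolated : ∀ z (v : R.V z), ∃ e : R.E z, R.ini z e = v ∨ R.fin z e = v
  no_bd_edge : ∀ c : R.Col, ¬ R.loopCol c → ∀ e : R.E (some c),
    ¬ ((R.ini (some c) e = R.bIni c ∧ R.fin (some c) e = R.bFin c) ∨
       (R.ini (some c) e = R.bFin c ∧ R.fin (some c) e = R.bIni c))
  two_edges : ∀ c : R.Col, 2 ≤ Fintype.card (R.E (some c))
  interior : ∀ c : R.Col, ∃ v : R.V (some c), v ≠ R.bIni c ∧ v ≠ R.bFin c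

end ERS

/-- `EndAt ι τ v α` : the edge with initial vertex `ι` and terminal vertex `τ`
is incident on `v`, in the fashion recorded by `α`: incoming (`in`), outgoing
(`out`) or a loop (`lp`). -/
inductive EndAt {V : Type} : V → V → V → EType → Prop
  | inn {i v : V} : i ≠ v → EndAt i v v .inn
  | out {t v : V} : v ≠ t → EndAt v t v .out
  | lp {v : V} : EndAt v v v .lp

/-- Two non-loop edges (given by their endpoints) are parallel. -/
def Parallel {V : Type} (ia ta ib tb : V) : Prop :=
  ia ≠ ta ∧ ((ia = ib ∧ ta = tb) ∨ (ia = tb ∧ ta = ib))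

/-- The Type 1 adjacency-type rule for two distinct adjacent edges, given by
their endpoints: parallel non-loops give the `db` types (same or opposite
orientation), and otherwise the unique common vertex `v` determines the types
via `EndAt`. -/
inductive AdjType {V : Type} : V → V → V → V → EType → EType → Prop
  | dbSame {u v : V} : u ≠ v → AdjType u v u v .dbp .dbp
  | dbOpp {u v : V} : u ≠ v → AdjType u v v u .dbp .dbm
  | single {ia ta ib tb v : V} {α β : EType} :
      ¬ Parallel ia ta ib tb → EndAt ia ta v α → EndAt ib tb v β →
      AdjType ia ta ib tb α β

/-- The states of the gluing automaton `Gl_R`. -/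
inductive GlState (R : ERS) : Type
  | q0 : Option R.Col → GlState R
  | q1 : R.Col → EType → R.Col → EType → GlState R

/-- Membership in `Q₀`. -/
def GlState.inQ0 {R : ERS} : GlState R → Prop
  | .q0 _ => True
  | _ => False

/-- Membership in `Q₁`. -/
def GlState.inQ1 {R : ERS} : GlState R → Prop
  | .q1 _ _ _ _ => True
  | _ => False

/-- The defining conditions for states of `Q₁`: `γ ≠ db⁻` and
(`δ ∈ {db⁺, db⁻}` iff `γ = db⁺`). -/
def GlState.Valid {R : ERS} : GlState R → Prop
  | .q0 _ => True
  | .q1 _ γ _ δ => γ ≠ .dbm ∧ ((δ = .dbp ∨ δ = .dbm) ↔ γ = .dbp)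

/-- The tracked boundary vertex of `Γ_c` for a non-`db` symbol:
`τ_c` for `in`, `ι_c` for `out`, and `λ_c` (the identified boundary vertex)
for `lp`. -/
def trackedV (R : ERS) (c : R.Col) : EType → Set (R.V (some c))
  | .inn => {R.bFin c}
  | .out => {R.bIni c}
  | .lp => {R.bIni c}
  | _ => ∅

/-- The pairs of tracked vertices of a state `q₁(i,γ;j,δ)`. -/
inductive TrackedPair (R : ERS) (i j : R.Col) :
    EType → EType → R.V (some i) → R.V (some j) → Prop
  | nondb {γ δ : EType} {u : R.V (some i)} {w : R.V (some j)} :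
      u ∈ trackedV R i γ → w ∈ trackedV R j δ → TrackedPair R i j γ δ u w
  | dbppIni : TrackedPair R i j .dbp .dbp (R.bIni i) (R.bIni j)
  | dbppFin : TrackedPair R i j .dbp .dbp (R.bFin i) (R.bFin j)
  | dbpmIni : TrackedPair R i j .dbp .dbm (R.bIni i) (R.bFin j)
  | dbpmFin : TrackedPair R i j .dbp .dbm (R.bFin i) (R.bIni j)

/-- The transitions of the gluing automaton `Gl_R`. -/
inductive GlTrans (R : ERS) : GlState R → R.Alph × R.Alph → GlState R → Prop
  | type0 (z : Option R.Col) (e : R.E z) :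
      GlTrans R (.q0 z) (⟨z, e⟩, ⟨z, e⟩) (.q0 (some (R.col z e)))
  | type1 (z : Option R.Col) (a b : R.E z) (hab : a ≠ b) {α β : EType}
      (h : AdjType (R.ini z a) (R.fin z a) (R.ini z b) (R.fin z b) α β) :
      GlTrans R (.q0 z) (⟨z, a⟩, ⟨z, b⟩) (.q1 (R.col z a) α (R.col z b) β)
  | type2 (i j : R.Col) (γ δ : EType) (a : R.E (some i)) (b : R.E (some j))
      {u : R.V (some i)} {w : R.V (some j)}
      (hp : TrackedPair R i j γ δ u w) {α β : EType}
      (ha : EndAt (R.ini (some i) a) (R.fin (some i) a) u α)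
      (hb : EndAt (R.ini (some j) b) (R.fin (some j) b) w β) :
      GlTrans R (.q1 i γ j δ) (⟨some i, a⟩, ⟨some j, b⟩)
        (.q1 (R.col (some i) a) α (R.col (some j) b) β)

/-- Infinite runs of `Gl_R` from the initial state `q₀(0)`. -/
def GlRun (R : ERS) (w : ℕ → R.Alph × R.Alph) (q : ℕ → GlState R) : Prop :=
  q 0 = .q0 none ∧ ∀ l : ℕ, GlTrans R (q l) (w l) (q (l + 1))

/-- `Gl_R` recognizes the infinite sequence `w`. -/
def GlAccepts (R : ERS) (w : ℕ → R.Alph × R.Alph) : Prop :=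
  ∃ q : ℕ → GlState R, GlRun R w q

/-- Finite runs of `Gl_R` processing the letters `w 0, …, w m`. -/
def GlRunFin (R : ERS) (w : ℕ → R.Alph × R.Alph) (m : ℕ) (q : ℕ → GlState R) : Prop :=
  q 0 = .q0 none ∧ ∀ l : ℕ, l ≤ m → GlTrans R (q l) (w l) (q (l + 1))

/-- `Gl_R` recognizes the finite word `w 0, …, w m`. -/
def GlAcceptsFin (R : ERS) (w : ℕ → R.Alph × R.Alph) (m : ℕ) : Prop :=
  ∃ q : ℕ → GlState R, GlRunFin R w m q

/-- The transitions of the full sub-automaton `T_R` induced by `Q₀`. -/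
def TTrans (R : ERS) (s : GlState R) (p : R.Alph × R.Alph) (t : GlState R) : Prop :=
  GlTrans R s p t ∧ s.inQ0 ∧ t.inQ0

/-- Finite runs of `T_R` processing the letters `w 0, …, w m`. -/
def TRunFin (R : ERS) (w : ℕ → R.Alph × R.Alph) (m : ℕ) (q : ℕ → GlState R) : Prop :=
  q 0 = .q0 none ∧ ∀ l : ℕ, l ≤ m → TTrans R (q l) (w l) (q (l + 1))

/-- `T_R` recognizes the finite word `w 0, …, w m`. -/
def TAcceptsFin (R : ERS) (w : ℕ → R.Alph × R.Alph) (m : ℕ) : Prop :=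
  ∃ q : ℕ → GlState R, TRunFin R w m q

end ERSPaper

/-!
Induction along the run. While the automaton stays in `Q₀` it reads diagonal letters, so both
words label the same edge. A Type 1 transition at an edge `e` picks two distinct adjacent edges of
`Γ_{c(e)}`; expanding `e` embeds `Γ_{c(e)}` injectively, so their adjacency type survives. At a
Type 2 transition the state remembers the type of the previous pair of edges; the tracked boundary
vertices of the two replacement graphs are glued to the common vertex of that pair, so the new
edges meet there with the types `α`, `β`. They cannot be parallel: edges expanded from different
parents share only boundary vertices, and an expanding system has no edge joining `ι_c` and `τ_c`.
-/

lemma Sigma.cast_snd_of_eq {ι : Type*} {β : ι → Type*} {p : Sigma β} {i : ι} {b : β i}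
    (hp : p = ⟨i, b⟩) (h : p.1 = i) : cast (congrArg β h) p.2 = b := by
  subst hp
  rfl

lemma Sigma.eq_mk_cast {ι : Type*} {β : ι → Type*} (p : Sigma β) {i : ι} (h : p.1 = i) :
    p = ⟨i, cast (congrArg β h) p.2⟩ := by
  subst h
  rfl

namespace ERSPaper

variable {R : ERS}

def GraphData.LoopColored (G : GraphData R) : Prop :=
  ∀ e : G.E, G.ι e = G.τ e ↔ R.loopCol (G.col e)

def GraphData.HasAdjType (G : GraphData R) (e f : G.E) (α β : EType) : Prop :=
  e ≠ f ∧ AdjType (G.ι e) (G.τ e) (G.ι f) (G.τ f) α β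

section AdjType

variable {V W : Type}

lemma EndAt.map {f : V → W} (hf : Function.Injective f) {i t v : V} {α : EType}
    (h : EndAt i t v α) : EndAt (f i) (f t) (f v) α := by
  cases h with
  | inn h => exact .inn (hf.ne h)
  | out h => exact .out (hf.ne h)
  | lp => exact .lp

lemma EndAt.incident {i t v : V} {α : EType} (h : EndAt i t v α) : i = v ∨ t = v := by
  cases h <;> simp

lemma Parallel.of_map {f : V → W} (hf : Function.Injective f) {ia ta ib tb : V}
    (h : Parallel (f ia) (f ta) (f ib) (f tb)) : Parallel ia ta ib tb := by
  obtain ⟨hne, ⟨h1, h2⟩ | ⟨h1, h2⟩⟩ := h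
  · exact ⟨ne_of_apply_ne f hne, .inl ⟨hf h1, hf h2⟩⟩
  · exact ⟨ne_of_apply_ne f hne, .inr ⟨hf h1, hf h2⟩⟩

lemma AdjType.map {f : V → W} (hf : Function.Injective f) {ia ta ib tb : V} {α β : EType}
    (h : AdjType ia ta ib tb α β) : AdjType (f ia) (f ta) (f ib) (f tb) α β := by
  cases h with
  | dbSame h => exact .dbSame (hf.ne h)
  | dbOpp h => exact .dbOpp (hf.ne h)
  | single hnp ha hb => exact .single (mt (Parallel.of_map hf) hnp) (ha.map hf) (hb.map hf)

lemma AdjType.exists_common_endpoint {ia ta ib tb : V} {α β : EType}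
    (h : AdjType ia ta ib tb α β) : ∃ v, (ia = v ∨ ta = v) ∧ (ib = v ∨ tb = v) := by
  cases h with
  | dbSame => exact ⟨_, .inl rfl, .inl rfl⟩
  | dbOpp => exact ⟨_, .inl rfl, .inr rfl⟩
  | single _ ha hb => exact ⟨_, ha.incident, hb.incident⟩

end AdjType

namespace ERS

section Attach

variable {G : GraphData R}

lemma attach_of_eq_bIni (e : G.E) {v : R.V (some (G.col e))} (h : v = R.bIni (G.col e)) :
    R.attach G e v = .inl (G.ι e) := by
  rw [attach, dif_pos h]

lemma attach_of_eq_bFin (hG : G.LoopColored) (e : G.E) {v : R.V (some (G.col e))}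
    (h : v = R.bFin (G.col e)) : R.attach G e v = .inl (G.τ e) := by
  by_cases h1 : v = R.bIni (G.col e)
  · rw [attach_of_eq_bIni e h1, (hG e).2 ((R.bd_eq_iff _).1 (h1.symm.trans h))]
  · rw [attach, dif_neg h1, dif_pos h]

lemma attach_of_interior (e : G.E) {v : R.V (some (G.col e))} (h1 : v ≠ R.bIni (G.col e))
    (h2 : v ≠ R.bFin (G.col e)) : R.attach G e v = .inr ⟨e, v, h1, h2⟩ := by
  rw [attach, dif_neg h1, dif_neg h2]

-- The boundary vertices go to the endpoints of `e`, which coincide exactly when they do.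
lemma attach_injective (hG : G.LoopColored) (e : G.E) : Function.Injective (R.attach G e) := by
  intro v v' h
  have hloop := (hG e).trans (R.bd_eq_iff (G.col e)).symm
  unfold attach at h
  split_ifs at h <;> simp_all

lemma loopColored_expandG (hG : G.LoopColored) : (R.expandG G).LoopColored :=
  fun ⟨e, a⟩ => (attach_injective hG e).eq_iff.trans (R.loop_iff _ a)

lemma loopColored_fullExp : ∀ m, (R.fullExp m).LoopColored
  | 0 => R.loop_iff none
  | m + 1 => loopColored_expandG (loopColored_fullExp m)

lemma attach_eq_attach_of_ne {ex ey : G.E} (hne : ex ≠ ey) {u : R.V (some (G.col ex))}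
    {w : R.V (some (G.col ey))} (h : R.attach G ex u = R.attach G ey w) :
    u = R.bIni (G.col ex) ∨ u = R.bFin (G.col ex) := by
  by_contra! hu
  rw [attach_of_interior ex hu.1 hu.2] at h
  unfold attach at h
  split_ifs at h
  exact hne (congrArg Sigma.fst (Sum.inr_injective h))

lemma attach_of_mem_trackedV (hG : G.LoopColored) {e : G.E} {v : G.V} {γ : EType}
    (he : EndAt (G.ι e) (G.τ e) v γ) {u : R.V (some (G.col e))}
    (hu : u ∈ trackedV R (G.col e) γ) : R.attach G e u = .inl v := by
  generalize hi : G.ι e = i at he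
  generalize ht : G.τ e = t at he
  cases he <;> simp only [trackedV, Set.mem_singleton_iff] at hu
  · rw [attach_of_eq_bFin hG e hu, ht]
  · rw [attach_of_eq_bIni e hu, hi]
  · rw [attach_of_eq_bIni e hu, hi]

lemma attach_eq_of_trackedPair (hG : G.LoopColored) {ex ey : G.E} {γ δ : EType}
    (hadj : AdjType (G.ι ex) (G.τ ex) (G.ι ey) (G.τ ey) γ δ)
    {u : R.V (some (G.col ex))} {w : R.V (some (G.col ey))}
    (hp : TrackedPair R (G.col ex) (G.col ey) γ δ u w) :
    R.attach G ex u = R.attach G ey w := by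
  generalize hia : G.ι ex = ia at hadj
  generalize hta : G.τ ex = ta at hadj
  generalize hib : G.ι ey = ib at hadj
  generalize htb : G.τ ey = tb at hadj
  cases hp with
  | nondb hu hw =>
    cases hadj with
    | dbSame => simp [trackedV] at hu
    | dbOpp => simp [trackedV] at hw
    | single _ ha hb =>
      subst hia hta hib htb
      rw [attach_of_mem_trackedV hG ha hu, attach_of_mem_trackedV hG hb hw]
  | dbppIni =>
    cases hadj with
    | dbSame => rw [attach_of_eq_bIni ex rfl, attach_of_eq_bIni ey rfl, hia, hib]
    | single _ ha => cases ha
  | dbppFin =>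
    cases hadj with
    | dbSame => rw [attach_of_eq_bFin hG ex rfl, attach_of_eq_bFin hG ey rfl, hta, htb]
    | single _ ha => cases ha
  | dbpmIni =>
    cases hadj with
    | dbOpp => rw [attach_of_eq_bIni ex rfl, attach_of_eq_bFin hG ey rfl, hia, htb]
    | single _ ha => cases ha
  | dbpmFin =>
    cases hadj with
    | dbOpp => rw [attach_of_eq_bFin hG ex rfl, attach_of_eq_bIni ey rfl, hta, hib]
    | single _ ha => cases ha

end Attach

lemma Expanding.not_boundary_endpoints (hR : R.Expanding) {c : R.Col} {a : R.E (some c)}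
    (hne : R.ini _ a ≠ R.fin _ a) (hi : R.ini _ a = R.bIni c ∨ R.ini _ a = R.bFin c)
    (hf : R.fin _ a = R.bIni c ∨ R.fin _ a = R.bFin c) : False := by
  by_cases hc : R.loopCol c
  · have hb := (R.bd_eq_iff c).2 hc
    simp only [← hb, or_self] at hi hf
    exact hne (hi.trans hf.symm)
  · refine hR.no_bd_edge c hc a ?_
    rcases hi with hi | hi <;> rcases hf with hf | hf
    · exact absurd (hi.trans hf.symm) hne
    · exact .inl ⟨hi, hf⟩
    · exact .inr ⟨hi, hf⟩
    · exact absurd (hi.trans hf.symm) hne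

lemma not_parallel_of_ne (hR : R.Expanding) {G : GraphData R} {ex ey : G.E} (hne : ex ≠ ey)
    (a : R.E (some (G.col ex))) (b : R.E (some (G.col ey))) :
    ¬ Parallel (R.attach G ex (R.ini _ a)) (R.attach G ex (R.fin _ a))
      (R.attach G ey (R.ini _ b)) (R.attach G ey (R.fin _ b)) := by
  rintro ⟨hloop, ⟨hi, hf⟩ | ⟨hi, hf⟩⟩ <;>
  exact hR.not_boundary_endpoints (fun h => hloop (congrArg _ h))
    (attach_eq_attach_of_ne hne hi) (attach_eq_attach_of_ne hne hf)

lemma hasAdjType_expandG_of_adjType {G : GraphData R} (hG : G.LoopColored) (e : G.E)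
    {a b : R.E (some (G.col e))} (hab : a ≠ b) {α β : EType}
    (h : AdjType (R.ini _ a) (R.fin _ a) (R.ini _ b) (R.fin _ b) α β) :
    (R.expandG G).HasAdjType ⟨e, a⟩ ⟨e, b⟩ α β :=
  ⟨sigma_mk_injective.ne hab, h.map (attach_injective hG e)⟩

end ERS

open ERS

lemma GraphData.HasAdjType.expandG (hR : R.Expanding) {G : GraphData R}
    (hG : G.LoopColored) {ex ey : G.E} {γ δ : EType} (h : G.HasAdjType ex ey γ δ)
    {u : R.V (some (G.col ex))} {w : R.V (some (G.col ey))}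
    (hp : TrackedPair R (G.col ex) (G.col ey) γ δ u w)
    {a : R.E (some (G.col ex))} {b : R.E (some (G.col ey))} {α β : EType}
    (ha : EndAt (R.ini _ a) (R.fin _ a) u α) (hb : EndAt (R.ini _ b) (R.fin _ b) w β) :
    (R.expandG G).HasAdjType ⟨ex, a⟩ ⟨ey, b⟩ α β := by
  have ha' := ha.map (attach_injective hG ex)
  rw [attach_eq_of_trackedPair hG h.2 hp] at ha'
  exact ⟨fun hab => h.1 (congrArg Sigma.fst hab),
    .single (not_parallel_of_ne hR h.1 a b) ha' (hb.map (attach_injective hG ey))⟩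

namespace ERS

lemma IsWalkUpTo.of_succ {x : ℕ → R.Alph} {m : ℕ} (hx : R.IsWalkUpTo x (m + 1)) :
    R.IsWalkUpTo x m :=
  ⟨hx.1, fun l hl => hx.2 l (hl.trans m.lt_succ_self)⟩

lemma IsWalkUpTo.succ {x : ℕ → R.Alph} {m : ℕ} (hx : R.IsWalkUpTo x m)
    (h : (x (m + 1)).1 = some (R.col (x m).1 (x m).2)) : R.IsWalkUpTo x (m + 1) :=
  ⟨hx.1, fun l hl => (Nat.lt_succ_iff_lt_or_eq.1 hl).elim (hx.2 l) (· ▸ h)⟩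

lemma IsWalkUpTo.congr {x y : ℕ → R.Alph} {m : ℕ} (hx : R.IsWalkUpTo x m)
    (h : ∀ l < m, x l = y l) (hm : (x m).1 = (y m).1) : R.IsWalkUpTo y m := by
  have hidx : ∀ l ≤ m, (x l).1 = (y l).1 := fun l hl =>
    hl.lt_or_eq.elim (fun hl => congrArg _ (h l hl)) (· ▸ hm)
  exact ⟨hidx 0 m.zero_le ▸ hx.1, fun l hl => by rw [← hidx (l + 1) hl, hx.2 l hl, h l hl]⟩

/-- The graph (`none` for the base graph) from which the `l`-th letter of a walk `x` is drawn. -/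
def walkIndex (R : ERS) (x : ℕ → R.Alph) : ℕ → Option R.Col
  | 0 => none
  | l + 1 => some (R.col (x l).1 (x l).2)

lemma walkIndex_succ (x : ℕ → R.Alph) (l : ℕ) :
    R.walkIndex x (l + 1) = some (R.col (x l).1 (x l).2) :=
  rfl

lemma isWalkUpTo_of_walkIndex {x : ℕ → R.Alph} {m : ℕ}
    (h : ∀ l ≤ m, (x l).1 = R.walkIndex x l) : R.IsWalkUpTo x m :=
  ⟨h 0 m.zero_le, fun l hl => h (l + 1) hl⟩

lemma wordEdge_zero_of_eq {x : ℕ → R.Alph} (hx : R.IsWalkUpTo x 0) {a : R.E none}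
    (h : x 0 = ⟨none, a⟩) : (R.wordEdge x 0 hx).1 = a :=
  Sigma.cast_snd_of_eq h hx.1

lemma wordEdge_succ_of_eq {x : ℕ → R.Alph} {m : ℕ} (hx : R.IsWalkUpTo x (m + 1))
    {e : (R.fullExp m).E} (he : (R.wordEdge x m hx.of_succ).1 = e)
    {a : R.E (some ((R.fullExp m).col e))} (h : x (m + 1) = ⟨_, a⟩) :
    (R.wordEdge x (m + 1) hx).1 = ⟨e, a⟩ := by
  subst he
  exact congrArg (Sigma.mk _) (Sigma.cast_snd_of_eq h (congrArg Sigma.fst h))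

lemma wordEdge_congr {x y : ℕ → R.Alph} : ∀ {m : ℕ}, (∀ l ≤ m, x l = y l) →
    ∀ (hx : R.IsWalkUpTo x m) (hy : R.IsWalkUpTo y m),
      (R.wordEdge x m hx).1 = (R.wordEdge y m hy).1
  | 0, h, hx, hy =>
    (wordEdge_zero_of_eq hy ((h 0 le_rfl).symm.trans (Sigma.eq_mk_cast _ hx.1))).symm
  | m + 1, h, hx, hy => by
    have he := wordEdge_congr (fun l hl => h l (hl.trans m.le_succ)) hx.of_succ hy.of_succ
    have hidx : (x (m + 1)).1 = some ((R.fullExp m).col (R.wordEdge x m hx.of_succ).1) :=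
      (hx.2 m m.lt_succ_self).trans (congrArg some (R.wordEdge x m _).2.symm)
    rw [wordEdge_succ_of_eq hy he.symm ((h (m + 1) le_rfl).symm.trans (Sigma.eq_mk_cast _ hidx))]
    rfl

end ERS

lemma GlTrans.inQ1_of_inQ1 {s t : GlState R} {p : R.Alph × R.Alph} (h : GlTrans R s p t)
    (hs : s.inQ1) : t.inQ1 := by
  cases h <;> trivial

lemma GlTrans.of_q0 {s : GlState R} {p : R.Alph × R.Alph} {z : Option R.Col}
    (h : GlTrans R s p (.q0 z)) :
    ∃ z' e, s = .q0 z' ∧ p = (⟨z', e⟩, ⟨z', e⟩) ∧ z = some (R.col z' e) := by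
  cases h
  exact ⟨_, _, rfl, rfl, rfl⟩

lemma GlRunFin.of_succ {w : ℕ → R.Alph × R.Alph} {k : ℕ} {q : ℕ → GlState R}
    (h : GlRunFin R w (k + 1) q) : GlRunFin R w k q :=
  ⟨h.1, fun l hl => h.2 l (hl.trans k.le_succ)⟩

section Run

variable {w : ℕ → R.Alph × R.Alph} {q : ℕ → GlState R}

lemma diag_of_run_q0 (h0 : q 0 = .q0 none) : ∀ {m : ℕ} {z : Option R.Col},
    (∀ l < m, GlTrans R (q l) (w l) (q (l + 1))) → q m = .q0 z →
    (∀ l < m, (w l).1 = (w l).2 ∧ ((w l).1).1 = R.walkIndex (fun n => (w n).1) l) ∧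
      z = R.walkIndex (fun n => (w n).1) m
  | 0, z, _, hz =>
    ⟨fun l hl => absurd hl l.not_lt_zero, (GlState.q0.inj (h0.symm.trans hz)).symm⟩
  | m + 1, z, htr, hz => by
    obtain ⟨z', e, hs, hp, rfl⟩ := (hz ▸ htr m m.lt_succ_self).of_q0
    obtain ⟨hprev, rfl⟩ := diag_of_run_q0 h0 (fun l hl => htr l (hl.trans m.lt_succ_self)) hs
    refine ⟨fun l hl => ?_, by rw [walkIndex_succ, hp]⟩
    rcases Nat.lt_succ_iff_lt_or_eq.1 hl with hl | rfl
    · exact hprev l hl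
    · rw [hp]
      exact ⟨rfl, rfl⟩

lemma hasAdjType_of_type1 {m : ℕ} {z : Option R.Col} {a b : R.E z} {α β : EType}
    (h0 : q 0 = .q0 none) (htr : ∀ l < m, GlTrans R (q l) (w l) (q (l + 1)))
    (hs : q m = .q0 z) (hp : w m = (⟨z, a⟩, ⟨z, b⟩)) (hab : a ≠ b)
    (hadj : AdjType (R.ini z a) (R.fin z a) (R.ini z b) (R.fin z b) α β) :
    ∃ (hx : R.IsWalkUpTo (fun n => (w n).1) m) (hy : R.IsWalkUpTo (fun n => (w n).2) m),
      (R.fullExp m).HasAdjType (R.wordEdge _ m hx).1 (R.wordEdge _ m hy).1 α β := by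
  obtain ⟨hprev, hz⟩ := diag_of_run_q0 h0 htr hs
  have hx : R.IsWalkUpTo (fun n => (w n).1) m := isWalkUpTo_of_walkIndex fun l hl =>
    hl.lt_or_eq.elim (fun hl => (hprev l hl).2) (by rintro rfl; rw [hp]; exact hz)
  have hy : R.IsWalkUpTo (fun n => (w n).2) m :=
    hx.congr (fun l hl => (hprev l hl).1) (by rw [hp])
  refine ⟨hx, hy, ?_⟩
  cases m with
  | zero =>
    obtain rfl : z = none := hz
    rw [wordEdge_zero_of_eq hx (by rw [hp]), wordEdge_zero_of_eq hy (by rw [hp])]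
    exact ⟨hab, hadj⟩
  | succ m =>
    set e := (R.wordEdge _ m hx.of_succ).1
    obtain rfl : z = some ((R.fullExp m).col e) :=
      hz.trans (congrArg some (R.wordEdge _ m hx.of_succ).2.symm)
    have he : (R.wordEdge _ m hy.of_succ).1 = e :=
      wordEdge_congr (fun l hl => ((hprev l (Nat.lt_succ_of_le hl)).1).symm) _ _
    rw [wordEdge_succ_of_eq hx rfl (by rw [hp]), wordEdge_succ_of_eq hy he (by rw [hp])]
    exact hasAdjType_expandG_of_adjType (loopColored_fullExp m) e hab hadj

lemma hasAdjType_succ_of_type2 (hR : R.Expanding) {x y : ℕ → R.Alph} {m : ℕ}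
    {hx : R.IsWalkUpTo x m} {hy : R.IsWalkUpTo y m} {γ δ α β : EType}
    (h : (R.fullExp m).HasAdjType (R.wordEdge x m hx).1 (R.wordEdge y m hy).1 γ δ)
    {i j : R.Col} {a : R.E (some i)} {b : R.E (some j)} {u : R.V (some i)} {v : R.V (some j)}
    (hxm : x (m + 1) = ⟨some i, a⟩) (hym : y (m + 1) = ⟨some j, b⟩)
    (hi : i = R.col (x m).1 (x m).2) (hj : j = R.col (y m).1 (y m).2)
    (hp : TrackedPair R i j γ δ u v) (ha : EndAt (R.ini _ a) (R.fin _ a) u α)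
    (hb : EndAt (R.ini _ b) (R.fin _ b) v β) :
    ∃ (hx' : R.IsWalkUpTo x (m + 1)) (hy' : R.IsWalkUpTo y (m + 1)),
      (R.fullExp (m + 1)).HasAdjType (R.wordEdge x _ hx').1 (R.wordEdge y _ hy').1 α β := by
  refine ⟨hx.succ ((congrArg Sigma.fst hxm).trans (congrArg some hi)),
    hy.succ ((congrArg Sigma.fst hym).trans (congrArg some hj)), ?_⟩
  obtain rfl : i = (R.fullExp m).col (R.wordEdge x m hx).1 := hi.trans (R.wordEdge x m hx).2.symm
  obtain rfl : j = (R.fullExp m).col (R.wordEdge y m hy).1 := hj.trans (R.wordEdge y m hy).2.symm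
  rw [wordEdge_succ_of_eq _ rfl hxm, wordEdge_succ_of_eq _ rfl hym]
  exact h.expandG hR (loopColored_fullExp m) hp ha hb

theorem GlRunFin.hasAdjType (hR : R.Expanding) {k : ℕ} (hrun : GlRunFin R w k q)
    (hq : (q (k + 1)).inQ1) :
    ∃ (hx : R.IsWalkUpTo (fun n => (w n).1) k) (hy : R.IsWalkUpTo (fun n => (w n).2) k)
      (α β : EType),
      q (k + 1) = .q1 (R.col ((w k).1).1 ((w k).1).2) α (R.col ((w k).2).1 ((w k).2).2) β ∧
      (R.fullExp k).HasAdjType (R.wordEdge _ k hx).1 (R.wordEdge _ k hy).1 α β := by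
  induction k using Nat.strong_induction_on with
  | _ k ih =>
    have htr := hrun.2 k le_rfl
    obtain ⟨p, hp⟩ : ∃ p, w k = p := ⟨_, rfl⟩
    rw [hp] at htr
    generalize hs : q k = s at htr
    generalize q (k + 1) = t at htr hq
    cases htr with
    | type0 => exact hq.elim
    | type1 z a b hab hadj =>
      obtain ⟨hx, hy, h⟩ :=
        hasAdjType_of_type1 hrun.1 (fun l hl => hrun.2 l hl.le) hs hp hab hadj
      exact ⟨hx, hy, _, _, hp ▸ rfl, h⟩
    | type2 i j γ δ a b htp ha hb =>
      obtain _ | k := k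
      · cases hs.symm.trans hrun.1
      obtain ⟨hx, hy, γ', δ', hstate, h⟩ :=
        ih k k.lt_succ_self hrun.of_succ (by rw [hs]; trivial)
      obtain ⟨hi, rfl, hj, rfl⟩ := GlState.q1.inj (hs.symm.trans hstate)
      obtain ⟨hx', hy', h'⟩ := hasAdjType_succ_of_type2 hR h
        (congrArg Prod.fst hp) (congrArg Prod.snd hp) hi hj htp ha hb
      exact ⟨hx', hy', _, _, hp ▸ rfl, h'⟩

end Run

/-- Type 2 transitions imply adjacency.  If the finite word
`(x₀,y₀)…(x_k,y_k)` is recognized by `Gl_R` and the transition processing the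
last letter `(x_k,y_k)` is a Type 2 transition (i.e. its source state lies in
`Q₁`), then `x₀…x_k` and `y₀…y_k` are adjacent edges of the full expansion
`E_k`, and the last state of the run is `q₁(c(x_k),α;c(y_k),β)` where `(α,β)`
records the adjacency type of `x₀…x_k` and `y₀…y_k` in `E_k` in the sense of
the Type 1 rule. -/
theorem type2_transition_implies_adjacency (R : ERS) (hR : R.Expanding)
    (w : ℕ → R.Alph × R.Alph) (k : ℕ) (q : ℕ → GlState R)
    (hrun : GlRunFin R w k q) (hq1 : (q k).inQ1) :
    ∃ (hx : R.IsWalkUpTo (fun n => (w n).1) k)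
      (hy : R.IsWalkUpTo (fun n => (w n).2) k),
      (R.fullExp k).Adjacent (R.wordEdge (fun n => (w n).1) k hx).1
        (R.wordEdge (fun n => (w n).2) k hy).1 ∧
      ∃ α β : EType,
        q (k + 1) =
          .q1 (R.col ((w k).1).1 ((w k).1).2) α
              (R.col ((w k).2).1 ((w k).2).2) β ∧
        AdjType ((R.fullExp k).ι (R.wordEdge (fun n => (w n).1) k hx).1)
                ((R.fullExp k).τ (R.wordEdge (fun n => (w n).1) k hx).1)
                ((R.fullExp k).ι (R.wordEdge (fun n => (w n).2) k hy).1)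
                ((R.fullExp k).τ (R.wordEdge (fun n => (w n).2) k hy).1) α β := by
  obtain ⟨hx, hy, α, β, hstate, -, hadj⟩ :=
    hrun.hasAdjType hR ((hrun.2 k le_rfl).inQ1_of_inQ1 hq1)
  exact ⟨hx, hy, hadj.exists_common_endpoint, α, β, hstate, hadj⟩

end ERSPaper
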